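/- arXiv:2309.03297 — 7 statements merged into one kernel-verified Lean document; each statement's English description precedes it below -/
import Mathlib

section
/- Let G be a group acting on a set Y, and let C : G × Y → ℝ be a bounded function satisfying the cocycle relation C(gh, y) = C(h, y) + C(g, hy) for all g, h ∈ G and y ∈ Y. Then the function ψ(y) := sup_{g ∈ G} C(g, y) is well-defined (finite) and solves the cohomological equation C(g, y) = ψ(y) − ψ(gy) for all g ∈ G and y ∈ Y. -/
/-! Reindexing the supremum by the right translation `g' ↦ g' * g` and applying the cocycle
relation gives `ψ y = C g y + ψ (g • y)`, where boundedness lets the supremum commute with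
adding the constant `C g y`. -/

open Set

theorem iSup_cocycle_eq_add {G Y α : Type*} [Group G] [MulAction G Y]
    [ConditionallyCompleteLattice α] [AddGroup α] [AddLeftMono α]
    (C : G → Y → α) (hcocycle : ∀ (g h : G) (y : Y), C (g * h) y = C h y + C g (h • y))
    (g : G) (y : Y) (hbdd : BddAbove (range fun g' => C g' (g • y))) :
    ⨆ g', C g' y = C g y + ⨆ g', C g' (g • y) :=
  calc ⨆ g', C g' y = ⨆ g', C (g' * g) y := ((Equiv.mulRight g).iSup_comp (g := (C · y))).symm
    _ = ⨆ g', (C g y + C g' (g • y)) := by simp only [hcocycle]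
    _ = C g y + ⨆ g', C g' (g • y) := ((OrderIso.addLeft (C g y)).map_ciSup hbdd).symm

/-- Let `G` be a group acting on a set `Y`, and let `C : G × Y → ℝ` be a
bounded function satisfying the cocycle relation `C(gh, y) = C(h, y) + C(g, hy)`. Then
`ψ(y) := sup_{g ∈ G} C(g, y)` solves the cohomological equation
`C(g, y) = ψ(y) − ψ(gy)`. -/
theorem stmt_0 {G Y : Type*} [Group G] [MulAction G Y]
    (C : G → Y → ℝ) (M : ℝ)
    (hbdd : ∀ (g : G) (y : Y), |C g y| ≤ M)
    (hcocycle : ∀ (g h : G) (y : Y), C (g * h) y = C h y + C g (h • y)) :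
    ∀ (g : G) (y : Y), C g y = (⨆ g' : G, C g' y) - ⨆ g' : G, C g' (g • y) := by
  intro g y
  have hbddAbove : BddAbove (range fun g' => C g' (g • y)) :=
    ⟨M, forall_mem_range.2 fun g' => (abs_le.1 (hbdd g' (g • y))).2⟩
  rw [iSup_cocycle_eq_add C hcocycle g y hbddAbove, add_sub_cancel_right]
end

section
/- Let G be a countable group acting measurably on a measure space (Y, λ′) such that λ′ is quasi-invariant: each g ∈ G preserves the measure class of λ′ and there is a constant k > 0, independent of g, with k⁻¹ ≤ (d g_*λ′ / dλ′)(y) ≤ k for λ′-a.e. y. Then there exists a measurable function ψ : Y → ℝ, bounded away from 0 and ∞, such that the measure λ defined by dλ = ψ dλ′ is G-invariant. -/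
open MeasureTheory
open scoped ENNReal

section Aux

variable {α β : Type*} [MeasurableSpace α] [MeasurableSpace β] {μ : Measure α}

lemma wd_sup {f g : α → ℝ≥0∞} (hf : Measurable f) (hg : Measurable g) :
    μ.withDensity (f ⊔ g) = μ.withDensity f ⊔ μ.withDensity g := by
  refine le_antisymm ?_ (sup_le (withDensity_mono (Filter.Eventually.of_forall fun x => le_sup_left))
    (withDensity_mono (Filter.Eventually.of_forall fun x => le_sup_right)))
  have hs : MeasurableSet {x | g x ≤ f x} := measurableSet_le hg hf
  set s : Set α := {x | g x ≤ f x} with hs_def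
  have hsplit : (f ⊔ g) = s.indicator f + sᶜ.indicator g := by
    funext x
    by_cases hx : x ∈ s
    · simp only [Pi.sup_apply, Set.indicator_of_mem hx, Pi.add_apply,
        Set.indicator_of_notMem (by simpa using hx : x ∉ sᶜ), add_zero]
      exact sup_eq_left.mpr hx
    · simp only [Pi.sup_apply, Set.indicator_of_notMem hx, Pi.add_apply,
        Set.indicator_of_mem (by simpa using hx : x ∈ sᶜ), zero_add]
      exact sup_eq_right.mpr (le_of_lt (by simpa [hs_def, not_le] using hx))
  rw [hsplit, withDensity_add_right _ (hg.indicator hs.compl),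
    withDensity_indicator hs, withDensity_indicator hs.compl,
    ← restrict_withDensity hs, ← restrict_withDensity hs.compl]
  calc (μ.withDensity f).restrict s + (μ.withDensity g).restrict sᶜ
      ≤ (μ.withDensity f ⊔ μ.withDensity g).restrict s
        + (μ.withDensity f ⊔ μ.withDensity g).restrict sᶜ :=
        add_le_add (Measure.restrict_mono le_rfl le_sup_left)
          (Measure.restrict_mono le_rfl le_sup_right)
    _ = μ.withDensity f ⊔ μ.withDensity g := Measure.restrict_add_restrict_compl hs

lemma wd_iSup {ι : Type*} [Countable ι] [Nonempty ι] (f : ι → α → ℝ≥0∞)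
    (hf : ∀ i, Measurable (f i)) :
    μ.withDensity (fun x => ⨆ i, f i x) = ⨆ i, μ.withDensity (f i) := by
  obtain ⟨e, he⟩ := exists_surjective_nat ι
  -- recursively defined increasing sequence of densities
  let u : ℕ → α → ℝ≥0∞ := fun n => Nat.rec (f (e 0)) (fun n acc => acc ⊔ f (e (n + 1))) n
  have hu_succ : ∀ n, u (n + 1) = u n ⊔ f (e (n + 1)) := fun n => rfl
  have hu_meas : ∀ n, Measurable (u n) := by
    intro n
    induction n with
    | zero => exact hf (e 0)
    | succ n ih => rw [hu_succ]; exact ih.sup (hf (e (n + 1)))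
  have hu_mono : Monotone u := monotone_nat_of_le_succ fun n => by rw [hu_succ]; exact le_sup_left
  have hu_le : ∀ n, μ.withDensity (u n) ≤ ⨆ i, μ.withDensity (f i) := by
    intro n
    induction n with
    | zero => exact le_iSup (fun i => μ.withDensity (f i)) (e 0)
    | succ n ih =>
      rw [hu_succ, wd_sup (hu_meas n) (hf (e (n + 1)))]
      exact sup_le ih (le_iSup (fun i => μ.withDensity (f i)) (e (n + 1)))
  have hfu : ∀ n x, f (e n) x ≤ u n x := by
    intro n x
    cases n with
    | zero => exact le_rfl
    | succ n => rw [hu_succ]; exact le_sup_right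
  have hu_bdd : ∀ n x, u n x ≤ ⨆ i, f i x := by
    intro n x
    induction n with
    | zero => exact le_iSup (fun i => f i x) (e 0)
    | succ n ih =>
      rw [hu_succ]
      exact sup_le ih (le_iSup (fun i => f i x) (e (n + 1)))
  have hpt : (fun x => ⨆ i, f i x) = fun x => ⨆ n, u n x := by
    funext x
    refine le_antisymm (iSup_le fun i => ?_) (iSup_le fun n => hu_bdd n x)
    obtain ⟨n, rfl⟩ := he i
    exact (hfu n x).trans (le_iSup (fun n => u n x) n)
  refine le_antisymm ?_ (iSup_le fun i =>
    withDensity_mono (Filter.Eventually.of_forall fun x => le_iSup (fun j => f j x) i))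
  rw [hpt]
  refine Measure.le_iff.mpr fun s hs => ?_
  rw [withDensity_apply _ hs, lintegral_iSup (fun n => (hu_meas n)) hu_mono]
  refine iSup_le fun n => ?_
  rw [← withDensity_apply _ hs]
  exact Measure.le_iff'.mp (hu_le n) s

lemma map_iSup_equiv {ι : Type*} (e : α ≃ᵐ β) (μ : ι → Measure α) :
    Measure.map e (⨆ i, μ i) = ⨆ i, Measure.map e (μ i) := by
  refine le_antisymm ?_ (iSup_le fun i => Measure.map_mono (le_iSup μ i) e.measurable)
  have h : (⨆ i, μ i) ≤ Measure.map e.symm (⨆ i, Measure.map e (μ i)) := by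
    refine iSup_le fun i => ?_
    have : μ i = Measure.map e.symm (Measure.map e (μ i)) := by
      rw [Measure.map_map e.symm.measurable e.measurable, e.symm_comp_self, Measure.map_id]
    rw [this]
    exact Measure.map_mono (le_iSup (fun j => Measure.map e (μ j)) i) e.symm.measurable
  calc Measure.map e (⨆ i, μ i)
      ≤ Measure.map e (Measure.map e.symm (⨆ i, Measure.map e (μ i))) :=
        Measure.map_mono h e.measurable
    _ = ⨆ i, Measure.map e (μ i) := by
        rw [Measure.map_map e.measurable e.symm.measurable, e.self_comp_symm, Measure.map_id]

end Aux

/-- Let `G` be a countable group acting measurably on a measure space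
`(Y, λ')` such that `λ'` is quasi-invariant: each `g ∈ G` preserves the measure class of `λ'`
and there is a constant `k > 0`, independent of `g`, with
`k⁻¹ ≤ (d g_*λ' / dλ')(y) ≤ k` for `λ'`-a.e. `y`. Then there exists a measurable function
`ψ : Y → ℝ`, bounded away from `0` and `∞`, such that the measure `λ` with `dλ = ψ dλ'` is
`G`-invariant. -/
theorem stmt_1 {G Y : Type*} [Group G] [Countable G] [MeasurableSpace Y] [MulAction G Y]
    (hmeas : ∀ g : G, Measurable (fun y : Y => g • y))
    (lam' : Measure Y)
    (k : ℝ) (hk : 0 < k)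
    (hquasi : ∀ g : G, Measure.map (fun y : Y => g • y) lam' ≪ lam' ∧
      lam' ≪ Measure.map (fun y : Y => g • y) lam')
    (hbound : ∀ g : G, ∀ᵐ y ∂lam',
      ENNReal.ofReal k⁻¹ ≤ (Measure.map (fun y : Y => g • y) lam').rnDeriv lam' y ∧
      (Measure.map (fun y : Y => g • y) lam').rnDeriv lam' y ≤ ENNReal.ofReal k) :
    ∃ ψ : Y → ℝ, Measurable ψ ∧
      (∃ c C : ℝ, 0 < c ∧ ∀ y : Y, c ≤ ψ y ∧ ψ y ≤ C) ∧
      ∀ g : G,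
        Measure.map (fun y : Y => g • y)
            (lam'.withDensity (fun y => ENNReal.ofReal (ψ y))) =
          lam'.withDensity (fun y => ENNReal.ofReal (ψ y)) := by
  by_cases hz : lam' = 0
  · refine ⟨fun _ => 1, measurable_const, ⟨1, 1, one_pos, fun y => ⟨le_rfl, le_rfl⟩⟩, fun g => ?_⟩
    subst hz
    simp
  -- the measurable equivalence induced by `g`
  set eqv : G → Y ≃ᵐ Y := fun g =>
    { toFun := fun y => g • y
      invFun := fun y => g⁻¹ • y
      left_inv := fun y => inv_smul_smul g y
      right_inv := fun y => smul_inv_smul g y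
      measurable_toFun := hmeas g
      measurable_invFun := hmeas g⁻¹ } with heqv
  have heqv_coe : ∀ g : G, ⇑(eqv g) = fun y : Y => g • y := fun g => rfl
  set f : G → Y → ℝ≥0∞ := fun g => (Measure.map (fun y : Y => g • y) lam').rnDeriv lam'
    with hf_def
  have hf_meas : ∀ g, Measurable (f g) := fun g => Measure.measurable_rnDeriv _ _
  -- the Lebesgue decompositions exist
  have hLD : ∀ g : G, (Measure.map (fun y : Y => g • y) lam').HaveLebesgueDecomposition lam' := by
    intro g
    by_contra hg
    have h0 := Measure.rnDeriv_of_not_haveLebesgueDecomposition hg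
    have hae := hbound g
    haveI : (ae lam').NeBot := ae_neBot.mpr hz
    obtain ⟨y, hy, -⟩ := hae.exists
    rw [h0] at hy
    simp only [Pi.zero_apply, le_zero_iff] at hy
    exact absurd hy (ENNReal.ofReal_pos.mpr (inv_pos.mpr hk)).ne'
  have hmapeq : ∀ g : G,
      Measure.map (fun y : Y => g • y) lam' = lam'.withDensity (f g) := by
    intro g
    haveI := hLD g
    exact (Measure.withDensity_rnDeriv_eq _ _ (hquasi g).1).symm
  -- the invariant measure as a supremum
  set ν : Measure Y := ⨆ g : G, Measure.map (fun y : Y => g • y) lam' with hν_def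
  have hν_wd : lam'.withDensity (fun y => ⨆ g : G, f g y) = ν := by
    rw [wd_iSup f hf_meas, hν_def]
    exact iSup_congr fun g => (hmapeq g).symm
  have hmap_mul : ∀ g h : G,
      Measure.map (fun y : Y => g • y) (Measure.map (fun y : Y => h • y) lam')
        = Measure.map (fun y : Y => (g * h) • y) lam' := by
    intro g h
    rw [Measure.map_map (hmeas g) (hmeas h)]
    congr 1
    funext y
    simp [Function.comp, mul_smul]
  have hν_inv : ∀ g : G, Measure.map (fun y : Y => g • y) ν = ν := by
    intro g
    rw [hν_def, ← heqv_coe g, map_iSup_equiv (eqv g)]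
    simp only [heqv_coe]
    refine le_antisymm (iSup_le fun h => ?_) (iSup_le fun h => ?_)
    · rw [hmap_mul g h]
      exact le_iSup (fun g' : G => Measure.map (fun y : Y => g' • y) lam') (g * h)
    · have : Measure.map (fun y : Y => h • y) lam'
          = Measure.map (fun y : Y => g • y) (Measure.map (fun y : Y => (g⁻¹ * h) • y) lam') := by
        rw [hmap_mul g (g⁻¹ * h), mul_inv_cancel_left]
      rw [this]
      exact le_iSup (fun h' : G =>
        Measure.map (fun y : Y => g • y) (Measure.map (fun y : Y => h' • y) lam')) (g⁻¹ * h)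
  -- the real-valued density
  set Ψ : Y → ℝ≥0∞ := fun y => ⨆ g : G, f g y with hΨ_def
  have hΨ_meas : Measurable Ψ := Measurable.iSup fun g => hf_meas g
  set ψ : Y → ℝ := fun y => max k⁻¹ (min k (Ψ y).toReal) with hψ_def
  have hψ_meas : Measurable ψ :=
    measurable_const.max (measurable_const.min hΨ_meas.ennreal_toReal)
  have hψ_bdd : ∀ y, k⁻¹ ≤ ψ y ∧ ψ y ≤ max k⁻¹ k := fun y =>
    ⟨le_max_left _ _, max_le (le_max_left _ _) ((min_le_left _ _).trans (le_max_right _ _))⟩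
  -- a.e. identification of the densities
  have h_all : ∀ᵐ y ∂lam', ∀ g : G, f g y ≤ ENNReal.ofReal k :=
    ae_all_iff.mpr fun g => (hbound g).mono fun y hy => hy.2
  have h_one : ∀ᵐ y ∂lam', ENNReal.ofReal k⁻¹ ≤ f 1 y := (hbound 1).mono fun y hy => hy.1
  have hae : (fun y => ENNReal.ofReal (ψ y)) =ᵐ[lam'] Ψ := by
    filter_upwards [h_all, h_one] with y hyall hy1
    have hle : Ψ y ≤ ENNReal.ofReal k := iSup_le hyall
    have hge : ENNReal.ofReal k⁻¹ ≤ Ψ y := hy1.trans (le_iSup (fun g : G => f g y) 1)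
    have hfin : Ψ y ≠ ⊤ := (hle.trans_lt ENNReal.ofReal_lt_top).ne
    have ht_le : (Ψ y).toReal ≤ k := by
      have := ENNReal.toReal_mono ENNReal.ofReal_ne_top hle
      rwa [ENNReal.toReal_ofReal hk.le] at this
    have ht_ge : k⁻¹ ≤ (Ψ y).toReal := (ENNReal.ofReal_le_iff_le_toReal hfin).mp hge
    show ENNReal.ofReal (max k⁻¹ (min k (Ψ y).toReal)) = Ψ y
    rw [min_eq_right ht_le, max_eq_right ht_ge, ENNReal.ofReal_toReal hfin]
  have hcongr : lam'.withDensity (fun y => ENNReal.ofReal (ψ y)) = ν := by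
    rw [withDensity_congr_ae hae, ← hν_wd]
  exact ⟨ψ, hψ_meas, ⟨k⁻¹, max k⁻¹ k, inv_pos.mpr hk, hψ_bdd⟩,
    fun g => by rw [hcongr]; exact hν_inv g⟩
end

section
/- Let (p_i) and (q_i) be probability vectors such that ∑_i −p_i log(q_i/p_i) ≤ C for some C ≥ 0. Then for any K > 1, the total mass of indices where p_i exceeds K q_i is small: ∑_{i : p_i > K q_i} p_i ≤ (C + 1)/log K. -/
open scoped Classical in
/-- The Kullback–Leibler divergence `∑ᵢ −pᵢ log(qᵢ/pᵢ) = ∑ᵢ pᵢ log(pᵢ/qᵢ)` of two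
countable nonnegative families, valued in `EReal = [−∞, ∞]`, with the conventions
`log 0 = −∞` and `0·log(0/0) = 0·log ∞ = 0`: it equals `⊤` if some index carries
`pᵢ > 0 = qᵢ`, or if the (conventional) series fails to converge. -/
noncomputable def klDiv {ι : Type*} (p q : ι → ℝ) : EReal :=
  if (∀ i, q i = 0 → p i = 0) ∧ Summable (fun i => p i * Real.log (p i / q i)) then
    (((∑' i, p i * Real.log (p i / q i) : ℝ) : EReal))
  else ⊤

/-- Let `(pᵢ)` and `(qᵢ)` be probability vectors such that
`∑ᵢ −pᵢ log(qᵢ/pᵢ) ≤ C` for some `C ≥ 0`. Then for any `K > 1`, the total mass of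
indices where `pᵢ > K qᵢ` satisfies `∑_{i : pᵢ > K qᵢ} pᵢ ≤ (C + 1)/log K`. -/
theorem stmt_4 {ι : Type*} [Countable ι] (p q : ι → ℝ)
    (hp0 : ∀ i, 0 ≤ p i) (hq0 : ∀ i, 0 ≤ q i)
    (hp1 : HasSum p 1) (hq1 : HasSum q 1)
    (C : ℝ) (hC : 0 ≤ C) (hKL : klDiv p q ≤ (C : EReal))
    (K : ℝ) (hK : 1 < K) :
    ∑' i, Set.indicator {i : ι | K * q i < p i} p i ≤ (C + 1) / Real.log K := by
  classical
  have hlogK : 0 < Real.log K := Real.log_pos hK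
  set f : ι → ℝ := fun i => p i * Real.log (p i / q i) with hf
  by_cases hc : (∀ i, q i = 0 → p i = 0) ∧ Summable f
  swap
  · exfalso
    rw [klDiv, if_neg hc] at hKL
    exact absurd (top_le_iff.1 hKL) (by simp)
  obtain ⟨habs, hsum⟩ := hc
  have hKLr : (∑' i, f i) ≤ C := by
    rw [klDiv, if_pos ⟨habs, hsum⟩] at hKL
    exact_mod_cast hKL
  set A : Set ι := {i : ι | K * q i < p i} with hA
  have hpsum : Summable p := hp1.summable
  have hqsum : Summable q := hq1.summable
  -- pointwise lower bound f i ≥ p i - q i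
  have hlb : ∀ i, p i - q i ≤ f i := by
    intro i
    rcases eq_or_lt_of_le (hp0 i) with h0 | hpos
    · simp only [hf, ← h0]
      simp [hq0 i]
    · have hq : 0 < q i := by
        rcases eq_or_lt_of_le (hq0 i) with h0' | h; · exact absurd (habs i h0'.symm) hpos.ne'
        · exact h
      have hlog : Real.log (q i / p i) ≤ q i / p i - 1 :=
        Real.log_le_sub_one_of_pos (div_pos hq hpos)
      have : 1 - q i / p i ≤ Real.log (p i / q i) := by
        rw [Real.log_div (ne_of_gt hpos) (ne_of_gt hq)]
        rw [Real.log_div (ne_of_gt hq) (ne_of_gt hpos)] at hlog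
        linarith
      have := mul_le_mul_of_nonneg_left this (le_of_lt hpos)
      calc p i - q i = p i * (1 - q i / p i) := by field_simp
        _ ≤ f i := this
  -- on A, f i ≥ p i * log K
  have hA_lb : ∀ i, A.indicator (fun i => p i * Real.log K) i ≤ A.indicator f i := by
    intro i
    by_cases hi : i ∈ A
    · simp only [Set.indicator_of_mem hi]
      have hKq : K * q i < p i := hi
      have hpos : 0 < p i := lt_of_le_of_lt (mul_nonneg (le_of_lt (lt_trans one_pos hK)) (hq0 i)) hKq
      have hq : 0 < q i := by
        rcases eq_or_lt_of_le (hq0 i) with h0' | h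
        · exact absurd (habs i h0'.symm) hpos.ne'
        · exact h
      have hdiv : K < p i / q i := (lt_div_iff₀ hq).2 (by linarith [hKq])
      have : Real.log K ≤ Real.log (p i / q i) := Real.log_le_log (by linarith [lt_trans one_pos hK]) (le_of_lt hdiv)
      exact mul_le_mul_of_nonneg_left this (hp0 i)
    · simp [Set.indicator_of_notMem hi]
  -- summabilities
  have hsfA : Summable (A.indicator f) := hsum.indicator A
  have hsfAc : Summable (Aᶜ.indicator f) := hsum.indicator Aᶜ
  have hspAc : Summable (Aᶜ.indicator p) := hpsum.indicator Aᶜ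
  have hsqAc : Summable (Aᶜ.indicator q) := hqsum.indicator Aᶜ
  have hspA : Summable (A.indicator p) := hpsum.indicator A
  -- split the sum
  have hsplit : (∑' i, A.indicator f i) + (∑' i, Aᶜ.indicator f i) = ∑' i, f i := by
    rw [← Summable.tsum_add hsfA hsfAc]
    exact tsum_congr fun i => Set.indicator_self_add_compl_apply A f i
  -- lower bound on the complement part
  have hcompl : (-1 : ℝ) ≤ ∑' i, Aᶜ.indicator f i := by
    have h1 : ∑' i, Aᶜ.indicator (fun i => p i - q i) i ≤ ∑' i, Aᶜ.indicator f i := by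
      apply Summable.tsum_le_tsum _ ((hspAc.sub hsqAc).congr ?_) hsfAc
      · intro i
        by_cases hi : i ∈ Aᶜ
        · simpa [Set.indicator_of_mem hi] using hlb i
        · simp [Set.indicator_of_notMem hi]
      · intro i
        by_cases hi : i ∈ Aᶜ <;> simp [Set.indicator_of_mem, Set.indicator_of_notMem, hi]
    have h2 : ∑' i, Aᶜ.indicator (fun i => p i - q i) i
        = (∑' i, Aᶜ.indicator p i) - ∑' i, Aᶜ.indicator q i := by
      rw [← Summable.tsum_sub hspAc hsqAc]
      exact tsum_congr fun i => by
        by_cases hi : i ∈ Aᶜ <;> simp [Set.indicator_of_mem, Set.indicator_of_notMem, hi]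
    have h3 : (0:ℝ) ≤ ∑' i, Aᶜ.indicator p i :=
      tsum_nonneg fun i => Set.indicator_nonneg (fun j _ => hp0 j) i
    have h4 : ∑' i, Aᶜ.indicator q i ≤ 1 := by
      calc ∑' i, Aᶜ.indicator q i ≤ ∑' i, q i :=
            Summable.tsum_le_tsum (fun i => by by_cases hi : i ∈ Aᶜ <;> simp [Set.indicator_of_mem, Set.indicator_of_notMem, hi, hq0 i]) hsqAc hqsum
        _ = 1 := hq1.tsum_eq
    linarith
  -- upper bound on the A part
  have hAf : ∑' i, A.indicator f i ≤ C + 1 := by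
    have : ∑' i, A.indicator f i = (∑' i, f i) - ∑' i, Aᶜ.indicator f i := by linarith [hsplit]
    rw [this]; linarith
  -- conclude
  rw [le_div_iff₀ hlogK]
  calc (∑' i, A.indicator p i) * Real.log K
      = ∑' i, A.indicator (fun i => p i * Real.log K) i := by
        rw [← tsum_mul_right]
        exact tsum_congr fun i => by
          by_cases hi : i ∈ A <;> simp [Set.indicator_of_mem, Set.indicator_of_notMem, hi]
    _ ≤ ∑' i, A.indicator f i := by
        apply Summable.tsum_le_tsum hA_lb _ hsfA
        exact ((hspA.mul_right (Real.log K)).congr fun i => by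
          by_cases hi : i ∈ A <;> simp [Set.indicator_of_mem, Set.indicator_of_notMem, hi])
    _ ≤ C + 1 := hAf
end

section
/- Let μ, μ′ be two Borel probability measures on a metric space Y, and let (ζ_n) be a sequence of countable Borel partitions of Y such that ζ_m(y) ⊆ ζ_n(y) whenever m ≥ n, and such that for μ-a.e. y the diameter of ζ_n(y) tends to 0. If the Kullback–Leibler divergences D_{ζ_n}(μ ∥ μ′) := ∑_{A ∈ ζ_n} −μ(A) log(μ′(A)/μ(A)) are bounded above uniformly in n, then μ is absolutely continuous with respect to μ′. -/
/-
Suppose `μ' E = 0 < μ E`. For `L ≥ 1`, outer regularity gives an open `U ⊇ E` with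
`L μ'(U) < 1`. On cells `A ⊆ U` use `μ A log(μ A / μ' A) ≥ μ A log L - L μ' A`, on the others
`μ A log(μ A / μ' A) ≥ -μ' A`; summing gives `D_{ζₙ} ≥ log L · μ(Sₙ) - 2`, where `Sₙ` is the
union of the cells of `ζₙ` inside `U`. Since the cells shrink, `μ(Sₙ) → μ(U) ≥ μ(E)`, so the
bound `C` forces `log L · μ(E) ≤ C + 2` for every `L`, which is absurd.
-/

open MeasureTheory Filter

namespace Real

lemma log_mul_sub_mul_le_mul_log_div {p q L : ℝ} (hp : 0 ≤ p) (hq : 0 ≤ q) (hL : 0 < L)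
    (hpq : q = 0 → p = 0) : log L * p - L * q ≤ p * log (p / q) := by
  rcases hq.eq_or_lt with rfl | hq
  · simp [hpq rfl]
  rcases hp.eq_or_lt with rfl | hp
  · simp only [mul_zero, zero_sub, zero_mul, neg_nonpos]
    positivity
  have key : 1 - L * q / p ≤ log (p / (L * q)) := by
    simpa using one_sub_inv_le_log_of_pos (x := p / (L * q)) (by positivity)
  have hsplit : log (p / q) = log L + log (p / (L * q)) := by
    rw [← log_mul hL.ne' (by positivity)]
    field_simp
  calc log L * p - L * q ≤ log L * p + p * (1 - L * q / p) := by
        field_simp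
        nlinarith
    _ ≤ p * log (p / q) := by
        rw [hsplit]
        nlinarith [mul_le_mul_of_nonneg_left key hp.le]

end Real

lemma le_klDiv_of_hasSum {ι : Type*} {p q : ι → ℝ} (hp : ∀ i, 0 ≤ p i) (hq : ∀ i, 0 ≤ q i)
    (T : Set ι) {L P Q Q' : ℝ} (hL : 0 < L) (hP : HasSum (fun i : T => p i) P)
    (hQ : HasSum (fun i : T => q i) Q) (hQ' : HasSum (fun i : ↥Tᶜ => q i) Q') :
    ((Real.log L * P - L * Q - Q' : ℝ) : EReal) ≤ klDiv p q := by
  unfold klDiv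
  split_ifs with h
  · obtain ⟨hpq, hsum⟩ := h
    have hT : Real.log L * P - L * Q ≤ ∑' i : T, p i * Real.log (p i / q i) :=
      hasSum_le (fun i : T => Real.log_mul_sub_mul_le_mul_log_div (hp i) (hq i) hL (hpq i))
        ((hP.mul_left _).sub (hQ.mul_left _)) (hsum.subtype T).hasSum
    have hTc : -Q' ≤ ∑' i : ↥Tᶜ, p i * Real.log (p i / q i) :=
      hasSum_le (fun i : ↥Tᶜ => by
          simpa using Real.log_mul_sub_mul_le_mul_log_div (hp i) (hq i) one_pos (hpq i))
        hQ'.neg (hsum.subtype Tᶜ).hasSum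
    rw [EReal.coe_le_coe_iff, ← (hsum.subtype T).tsum_add_tsum_compl (hsum.subtype Tᶜ)]
    linarith
  · exact le_top

open Set Function

lemma hasSum_measureReal_iUnion {Y ι : Type*} [MeasurableSpace Y] [Countable ι] (ν : Measure Y)
    [IsFiniteMeasure ν] {A : ι → Set Y} (hA : ∀ i, MeasurableSet (A i))
    (hd : Pairwise (Disjoint on A)) : HasSum (fun i => ν.real (A i)) (ν.real (⋃ i, A i)) := by
  have h := measure_iUnion (μ := ν) hd hA
  rw [measureReal_def, h, ENNReal.tsum_toReal_eq fun i => measure_ne_top ν _]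
  exact ENNReal.hasSum_toReal (h ▸ measure_ne_top ν _)

section Partition

variable {Y : Type*} {ζ : Y → Set Y}

lemma setOf_subset_eq_iUnion (hmem : ∀ y, y ∈ ζ y) (hpart : ∀ y y', y' ∈ ζ y → ζ y' = ζ y)
    (U : Set Y) : {y | ζ y ⊆ U} = ⋃ A : {A : range ζ | A.1 ⊆ U}, A.1.1 := by
  ext y
  simp only [mem_iUnion]
  constructor
  · exact fun hy => ⟨⟨⟨ζ y, mem_range_self y⟩, hy⟩, hmem y⟩
  · rintro ⟨⟨⟨_, w, rfl⟩, hwU⟩, hy⟩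
    show ζ y ⊆ U
    rwa [hpart w y hy]

lemma pairwise_disjoint_range_of_partition (hpart : ∀ y y', y' ∈ ζ y → ζ y' = ζ y) :
    Pairwise (Disjoint on fun A : range ζ => A.1) := by
  rintro ⟨_, a, rfl⟩ ⟨_, b, rfl⟩ hne
  exact disjoint_left.2 fun z hza hzb =>
    hne (Subtype.ext ((hpart a z hza).symm.trans (hpart b z hzb)))

lemma log_mul_measureReal_sub_le_klDiv [MeasurableSpace Y] (μ μ' : Measure Y)
    [IsFiniteMeasure μ] [IsProbabilityMeasure μ'] (hmem : ∀ y, y ∈ ζ y)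
    (hpart : ∀ y y', y' ∈ ζ y → ζ y' = ζ y)
    (hmeas : ∀ y, MeasurableSet (ζ y)) (hcount : (range ζ).Countable) (U : Set Y) {L : ℝ}
    (hL : 0 < L) :
    ((Real.log L * μ.real {y | ζ y ⊆ U} - L * μ'.real U - 1 : ℝ) : EReal) ≤
      klDiv (fun A : range ζ => μ.real A.1) (fun A : range ζ => μ'.real A.1) := by
  have : Countable (range ζ) := hcount.to_subtype
  have hsum (ν : Measure Y) [IsFiniteMeasure ν] (s : Set (range ζ)) :
      HasSum (fun A : s => ν.real A.1.1) (ν.real (⋃ A : s, A.1.1)) :=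
    hasSum_measureReal_iUnion ν (fun ⟨⟨_, w, rfl⟩, _⟩ => hmeas w)
      ((pairwise_disjoint_range_of_partition hpart).comp_of_injective Subtype.val_injective)
  set T : Set (range ζ) := {A | A.1 ⊆ U}
  refine le_trans ?_ (le_klDiv_of_hasSum (fun _ => measureReal_nonneg)
    (fun _ => measureReal_nonneg) T hL (hsum μ T) (hsum μ' T) (hsum μ' Tᶜ))
  rw [EReal.coe_le_coe_iff, setOf_subset_eq_iUnion hmem hpart U]
  have hQ : μ'.real (⋃ A : T, A.1.1) ≤ μ'.real U :=
    measureReal_mono (iUnion_subset fun A => A.2)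
  have hQ' : μ'.real (⋃ A : ↥Tᶜ, A.1.1) ≤ 1 := measureReal_le_one
  nlinarith

end Partition

lemma tendsto_measure_setOf_subset {Y : Type*} [PseudoEMetricSpace Y] [MeasurableSpace Y]
    {μ : Measure Y} {ζ : ℕ → Y → Set Y} (hmem : ∀ n y, y ∈ ζ n y)
    (hnested : ∀ m n, n ≤ m → ∀ y, ζ m y ⊆ ζ n y)
    (hshrink : ∀ᵐ y ∂μ, Tendsto (fun n => Metric.ediam (ζ n y)) atTop (nhds 0))
    {U : Set Y} (hU : IsOpen U) : Tendsto (fun n => μ {y | ζ n y ⊆ U}) atTop (nhds (μ U)) := by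
  have hmono : Monotone fun n => {y | ζ n y ⊆ U} :=
    fun n m hnm y hy => (hnested m n hnm y).trans hy
  have hcover : U ≤ᵐ[μ] ⋃ n, {y | ζ n y ⊆ U} := by
    filter_upwards [hshrink] with y hy hyU
    obtain ⟨r, hr, hball⟩ := EMetric.isOpen_iff.1 hU y hyU
    obtain ⟨n, hn⟩ := (hy.eventually (Iio_mem_nhds hr)).exists
    exact mem_iUnion.2 ⟨n, fun z hz => hball <|
      (Metric.edist_le_ediam_of_mem hz (hmem n y)).trans_lt hn⟩
  have hunion : μ (⋃ n, {y | ζ n y ⊆ U}) = μ U :=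
    le_antisymm (measure_mono (iUnion_subset fun n y hy => hy (hmem n y)))
      (measure_mono_ae hcover)
  exact hunion ▸ tendsto_measure_iUnion_atTop hmono

/-- Let `μ, μ'` be two Borel probability measures on a metric space `Y`,
and let `(ζₙ)` be a sequence of countable Borel partitions of `Y` (here `ζ n y` denotes the
element of the `n`-th partition containing `y`) which are nested (`ζ m y ⊆ ζ n y` for
`m ≥ n`) and nicely shrinking with respect to `μ` (for `μ`-a.e. `y`, `diam (ζ n y) → 0`).
If the Kullback–Leibler divergences `D_{ζₙ}(μ ∥ μ') = ∑_{A ∈ ζₙ} −μ(A) log(μ'(A)/μ(A))`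
are bounded above uniformly in `n`, then `μ ≪ μ'`. -/
theorem stmt_5 {Y : Type*} [MetricSpace Y] [MeasurableSpace Y] [BorelSpace Y]
    (μ μ' : Measure Y) [IsProbabilityMeasure μ] [IsProbabilityMeasure μ']
    (ζ : ℕ → Y → Set Y)
    (hmem : ∀ n y, y ∈ ζ n y)
    (hpart : ∀ n y y', y' ∈ ζ n y → ζ n y' = ζ n y)
    (hmeas : ∀ n y, MeasurableSet (ζ n y))
    (hcount : ∀ n, (Set.range (ζ n)).Countable)
    (hnested : ∀ m n, n ≤ m → ∀ y, ζ m y ⊆ ζ n y)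
    (hshrink : ∀ᵐ y ∂μ, Tendsto (fun n => EMetric.diam (ζ n y)) atTop (nhds 0))
    (C : ℝ)
    (hbdd : ∀ n, klDiv (fun A : Set.range (ζ n) => (μ A.1).toReal)
        (fun A : Set.range (ζ n) => (μ' A.1).toReal) ≤ (C : EReal)) :
    μ ≪ μ' := by
  have hopen {L : ℝ} (hL : 0 < L) {U : Set Y} (hU : IsOpen U) :
      Real.log L * μ.real U - L * μ'.real U - 1 ≤ C := by
    have hlim := (ENNReal.tendsto_toReal (measure_ne_top μ U)).comp
      (tendsto_measure_setOf_subset hmem hnested hshrink hU)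
    refine le_of_tendsto' (((hlim.const_mul _).sub_const _).sub_const _) fun n => ?_
    exact EReal.coe_le_coe_iff.1 <| (log_mul_measureReal_sub_le_klDiv μ μ' (hmem n) (hpart n)
      (hmeas n) (hcount n) U hL).trans (hbdd n)
  have hnull {L : ℝ} (hL : 1 ≤ L) {E : Set Y} (hE : μ' E = 0) :
      Real.log L * μ.real E ≤ C + 2 := by
    have hL0 : 0 < L := one_pos.trans_le hL
    obtain ⟨U, hEU, hU, hμ'U⟩ := E.exists_isOpen_lt_of_lt (μ := μ') (ENNReal.ofReal (1 / L))
      (by simpa [hE] using hL0)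
    have hLU : L * μ'.real U < 1 := (lt_div_iff₀' hL0).1 (ENNReal.toReal_lt_of_lt_ofReal hμ'U)
    have hEU' := mul_le_mul_of_nonneg_left (measureReal_mono hEU (μ := μ)) (Real.log_nonneg hL)
    linarith [hopen hL0 hU]
  intro E hE
  by_contra hμE
  have hpos : 0 < μ.real E := ENNReal.toReal_pos hμE (measure_ne_top μ E)
  obtain ⟨L, hL, hLC⟩ := ((eventually_ge_atTop 1).and
    ((Real.tendsto_log_atTop.atTop_mul_const hpos).eventually_gt_atTop (C + 2))).exists
  exact (hnull hL hE).not_gt hLC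
end

section
/- Let μ, μ′ be Borel probability measures on a metric space Y, and (ζ_n) nested countable partitions that are nicely shrinking with respect to μ. If μ is not absolutely continuous with respect to μ′, then the Kullback–Leibler divergences D_{ζ_n}(μ ∥ μ′) = ∑_{A ∈ ζ_n} −μ(A) log(μ′(A)/μ(A)) tend to infinity as n → ∞. -/
open MeasureTheory Filter Set Function
open scoped Topology

/-!
Since `μ` is not absolutely continuous with respect to `μ'`, there is a set `S` with `μ' S = 0`
and `μ S = a > 0`. By outer regularity of `μ'`, `S` lies in an open set `U` of arbitrarily small
`μ'`-measure `δ`. As the cells shrink, `μ`-almost every point of `U` eventually has its whole cell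
inside `U`, so the union `Eₙ` of the cells of `ζₙ` contained in `U` has `μ Eₙ > a / 2` for large
`n`, while `μ' Eₙ ≤ δ`. Merging the cells of `ζₙ` into the two-set partition `{Eₙ, Eₙᶜ}` can only
decrease the divergence (log-sum inequality), and the divergence of the merged partition is at
least `(a / 2) log (1 / δ) - 2`.
-/

theorem sub_le_mul_log_div {p q : ℝ} (hp : 0 ≤ p) (hq : 0 ≤ q) (hpq : q = 0 → p = 0) :
    p - q ≤ p * Real.log (p / q) := by
  rcases hp.eq_or_lt with rfl | hp
  · simpa using hq
  have hq : 0 < q := hq.lt_of_ne fun h => hp.ne' (hpq h.symm)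
  have hlog := Real.one_sub_inv_le_log_of_pos (div_pos hp hq)
  rw [inv_div] at hlog
  calc p - q = p * (1 - q / p) := by field_simp
    _ ≤ p * Real.log (p / q) := mul_le_mul_of_nonneg_left hlog hp.le

section KLDivergence

variable {ι κ : Type*} {p q : ι → ℝ}

/-- The log-sum inequality for countable families. -/
theorem mul_log_div_le_tsum_mul_log_div {P Q : ℝ} (hp : ∀ i, 0 ≤ p i) (hq : ∀ i, 0 ≤ q i)
    (hpq : ∀ i, q i = 0 → p i = 0) (hP : HasSum p P) (hQ : HasSum q Q)
    (hf : Summable fun i => p i * Real.log (p i / q i)) :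
    P * Real.log (P / Q) ≤ ∑' i, p i * Real.log (p i / q i) := by
  by_cases hp0 : ∀ i, p i = 0
  · have hP0 : P = 0 := hP.unique (by simp [funext hp0])
    simp [hP0, hp0]
  obtain ⟨i₀, hi₀⟩ := not_forall.1 hp0
  have hP0 : 0 < P := ((hp i₀).lt_of_ne' hi₀).trans_le (le_hasSum hP i₀ fun j _ => hp j)
  have hqi₀ : 0 < q i₀ := (hq i₀).lt_of_ne fun h => hi₀ (hpq i₀ h.symm)
  have hQ0 : 0 < Q := hqi₀.trans_le (le_hasSum hQ i₀ fun j _ => hq j)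
  -- The tangent-line bound `p - c q ≤ p log (p / (c q))` at the ratio `c = P / Q` of the sums.
  set c := P / Q
  have hc : 0 < c := div_pos hP0 hQ0
  have hpoint : ∀ i, p i * Real.log c + (p i - c * q i) ≤ p i * Real.log (p i / q i) := by
    intro i
    rcases (hp i).eq_or_lt with h | h
    · simp [← h, mul_nonneg hc.le (hq i)]
    have hqi : 0 < q i := (hq i).lt_of_ne fun h' => h.ne' (hpq i h'.symm)
    have hcq := mul_pos hc hqi
    have key := sub_le_mul_log_div (hp i) hcq.le fun h' => absurd h' hcq.ne'
    rw [div_mul_eq_div_div_swap, Real.log_div (div_pos h hqi).ne' hc.ne'] at key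
    linarith
  have hsum : HasSum (fun i => p i * Real.log c + (p i - c * q i)) (P * Real.log c + (P - c * Q)) :=
    (hP.mul_right _).add (hP.sub (hQ.mul_left c))
  have hcQ : c * Q = P := div_mul_cancel₀ P hQ0.ne'
  simpa [hcQ] using hasSum_le hpoint hsum hf.hasSum

theorem le_klDiv {x : EReal}
    (h : (∀ i, q i = 0 → p i = 0) → Summable (fun i => p i * Real.log (p i / q i)) →
      x ≤ ((∑' i, p i * Real.log (p i / q i) : ℝ) : EReal)) :
    x ≤ klDiv p q := by
  unfold klDiv
  split_ifs with hc
  exacts [h hc.1 hc.2, le_top]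

theorem klDiv_of_summable (hpq : ∀ i, q i = 0 → p i = 0)
    (hf : Summable fun i => p i * Real.log (p i / q i)) :
    klDiv p q = ((∑' i, p i * Real.log (p i / q i) : ℝ) : EReal) := by
  unfold klDiv
  rw [if_pos ⟨hpq, hf⟩]

theorem klDiv_le_klDiv_of_hasSum_fiberwise (φ : ι → κ) (hp : ∀ i, 0 ≤ p i) (hq : ∀ i, 0 ≤ q i)
    (hsp : Summable p) (hsq : Summable q) {P Q : κ → ℝ}
    (hP : ∀ j, HasSum (fun i : φ ⁻¹' {j} => p i) (P j))
    (hQ : ∀ j, HasSum (fun i : φ ⁻¹' {j} => q i) (Q j)) :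
    klDiv P Q ≤ klDiv p q := by
  refine le_klDiv fun hpq hf => ?_
  have hPQ : ∀ j, Q j = 0 → P j = 0 := by
    intro j hj
    have hQj := hQ j
    rw [hj, hasSum_zero_iff_of_nonneg fun i : φ ⁻¹' {j} => hq i] at hQj
    refine (hP j).unique ?_
    convert hasSum_zero with i
    exact hpq _ (congrFun hQj i)
  have hPsum : HasSum P (∑' i, p i) := by
    have h : (fun j => ∑' i : φ ⁻¹' {j}, p i) = P := funext fun j => (hP j).tsum_eq
    exact h ▸ hsp.hasSum.tsum_fiberwise φ
  have hQsum : HasSum Q (∑' i, q i) := by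
    have h : (fun j => ∑' i : φ ⁻¹' {j}, q i) = Q := funext fun j => (hQ j).tsum_eq
    exact h ▸ hsq.hasSum.tsum_fiberwise φ
  have hfsum := hf.hasSum.tsum_fiberwise φ
  have hlower : ∀ j, P j - Q j ≤ P j * Real.log (P j / Q j) := fun j =>
    sub_le_mul_log_div (HasSum.nonneg (fun i : φ ⁻¹' {j} => hp i) (hP j))
      (HasSum.nonneg (fun i : φ ⁻¹' {j} => hq i) (hQ j)) (hPQ j)
  have hupper : ∀ j, P j * Real.log (P j / Q j) ≤ ∑' i : φ ⁻¹' {j}, p i * Real.log (p i / q i) :=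
    fun j => mul_log_div_le_tsum_mul_log_div (fun i => hp i) (fun i => hq i) (fun i => hpq i)
      (hP j) (hQ j) (hf.subtype _)
  -- Sandwiched between two summable families, the merged terms are summable.
  have hF : Summable fun j => P j * Real.log (P j / Q j) := by
    have hdiff := hPsum.summable.sub hQsum.summable
    have := (hfsum.summable.sub hdiff).of_nonneg_of_le (fun j => sub_nonneg.2 (hlower j))
      (fun j => sub_le_sub_right (hupper j) _)
    simpa using this.add hdiff
  rw [klDiv_of_summable hPQ hF, ← hfsum.tsum_eq, EReal.coe_le_coe_iff]
  exact hF.tsum_le_tsum hupper hfsum.summable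

theorem mul_neg_log_sub_two_le_klDiv {P Q : Bool → ℝ} (hP : ∀ b, 0 ≤ P b) (hQ : ∀ b, 0 ≤ Q b)
    (hQ₁ : Q false ≤ 1) {δ : ℝ} (hQδ : Q true ≤ δ) :
    ((P true * -Real.log δ - 2 : ℝ) : EReal) ≤ klDiv P Q := by
  refine le_klDiv fun hPQ _ => ?_
  rw [tsum_bool, EReal.coe_le_coe_iff]
  have hfalse := sub_le_mul_log_div (hP false) (hQ false) (hPQ false)
  have htrue : P true * -Real.log δ + P true - 1 ≤ P true * Real.log (P true / Q true) := by
    rcases (hP true).eq_or_lt with h | h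
    · simp [← h]
    have hQt : 0 < Q true := (hQ true).lt_of_ne fun h' => h.ne' (hPQ true h'.symm)
    have hlogP := sub_le_mul_log_div h.le zero_le_one (by simp)
    rw [div_one] at hlogP
    have hlogQ := Real.log_le_log hQt hQδ
    rw [Real.log_div h.ne' hQt.ne']
    nlinarith
  linarith [hP false, hP true]

end KLDivergence

theorem hasSum_measure_toReal {Y α : Type*} [MeasurableSpace Y] [Countable α] (μ : Measure Y)
    [IsFiniteMeasure μ] {s : α → Set Y} (hs : ∀ a, MeasurableSet (s a))
    (hd : Pairwise (Disjoint on s)) :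
    HasSum (fun a => (μ (s a)).toReal) (μ (⋃ a, s a)).toReal := by
  have hU := measure_iUnion (μ := μ) hd hs
  have hfin : ∑' a, μ (s a) ≠ ⊤ := hU ▸ measure_ne_top μ _
  rw [hU, ENNReal.tsum_toReal_eq fun a => measure_ne_top μ _]
  exact ENNReal.hasSum_toReal hfin

section Partition

variable {Y : Type*} {c : Y → Set Y}

theorem pairwise_disjoint_range (hpart : ∀ y y', y' ∈ c y → c y' = c y) :
    Pairwise (Disjoint on fun A : range c => (A : Set Y)) := by
  rintro ⟨_, y, rfl⟩ ⟨_, y', rfl⟩ hne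
  refine Set.disjoint_left.2 fun z hz hz' => hne (Subtype.ext ?_)
  exact (hpart y z hz).symm.trans (hpart y' z hz')

theorem iUnion_range_eq_setOf (hmem : ∀ y, y ∈ c y) (hpart : ∀ y y', y' ∈ c y → c y' = c y)
    (T : Set (range c)) :
    ⋃ A : T, (A.1 : Set Y) = {y | ⟨c y, mem_range_self y⟩ ∈ T} := by
  ext y
  simp only [mem_iUnion, mem_ofPred_eq]
  constructor
  · rintro ⟨⟨⟨_, y', rfl⟩, hA⟩, hy⟩
    rwa [show (⟨c y, mem_range_self y⟩ : range c) = ⟨c y', y', rfl⟩ from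
      Subtype.ext (hpart y' y hy)]
  · exact fun hy => ⟨⟨_, hy⟩, hmem y⟩

variable [MeasurableSpace Y] [Countable (range c)]
  (hmem : ∀ y, y ∈ c y) (hpart : ∀ y y', y' ∈ c y → c y' = c y)
  (hmeas : ∀ y, MeasurableSet (c y))
include hmem hpart hmeas

theorem hasSum_measure_range_toReal (μ : Measure Y) [IsFiniteMeasure μ] (T : Set (range c)) :
    HasSum (fun A : T => (μ A.1).toReal) (μ {y | ⟨c y, mem_range_self y⟩ ∈ T}).toReal := by
  rw [← iUnion_range_eq_setOf hmem hpart T]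
  refine hasSum_measure_toReal μ (fun ⟨⟨_, y, rfl⟩, _⟩ => hmeas y) fun A B hAB => ?_
  exact pairwise_disjoint_range hpart (Subtype.coe_injective.ne hAB)

theorem klDiv_fiberwise_le_klDiv_range {κ : Type*} (μ μ' : Measure Y) [IsFiniteMeasure μ]
    [IsFiniteMeasure μ'] (φ : Set Y → κ) :
    klDiv (fun j => (μ {y | φ (c y) = j}).toReal) (fun j => (μ' {y | φ (c y) = j}).toReal) ≤
      klDiv (fun A : range c => (μ A).toReal) (fun A : range c => (μ' A).toReal) := by
  have hsum (ν : Measure Y) [IsFiniteMeasure ν] : Summable fun A : range c => (ν A).toReal :=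
    (hasSum_measure_toReal ν (fun ⟨_, y, rfl⟩ => hmeas y)
      (pairwise_disjoint_range hpart)).summable
  exact klDiv_le_klDiv_of_hasSum_fiberwise (fun A : range c => φ A)
    (fun _ => ENNReal.toReal_nonneg) (fun _ => ENNReal.toReal_nonneg) (hsum μ) (hsum μ')
    (fun j => hasSum_measure_range_toReal hmem hpart hmeas μ _)
    (fun j => hasSum_measure_range_toReal hmem hpart hmeas μ' _)

theorem mul_neg_log_sub_two_le_klDiv_range (μ μ' : Measure Y) [IsFiniteMeasure μ]
    [IsProbabilityMeasure μ'] {U : Set Y} {δ : ℝ} (hδ : (μ' U).toReal ≤ δ) :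
    (((μ {y | c y ⊆ U}).toReal * -Real.log δ - 2 : ℝ) : EReal) ≤
      klDiv (fun A : range c => (μ A).toReal) (fun A : range c => (μ' A).toReal) := by
  classical
  set P : Bool → ℝ := fun b => (μ {y | decide (c y ⊆ U) = b}).toReal
  set Q : Bool → ℝ := fun b => (μ' {y | decide (c y ⊆ U) = b}).toReal
  have htrue (ν : Measure Y) : ν {y | decide (c y ⊆ U) = true} = ν {y | c y ⊆ U} := by
    simp only [decide_eq_true_eq]
  have hQ : Q true ≤ δ := by
    simp only [Q, htrue]
    exact (ENNReal.toReal_mono (measure_ne_top μ' U)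
      (measure_mono fun y (hy : c y ⊆ U) => hy (hmem y))).trans hδ
  calc (((μ {y | c y ⊆ U}).toReal * -Real.log δ - 2 : ℝ) : EReal)
      = ((P true * -Real.log δ - 2 : ℝ) : EReal) := by simp only [P, htrue]
    _ ≤ klDiv P Q := mul_neg_log_sub_two_le_klDiv (P := P) (Q := Q)
        (fun _ => ENNReal.toReal_nonneg) (fun _ => ENNReal.toReal_nonneg) measureReal_le_one hQ
    _ ≤ _ := klDiv_fiberwise_le_klDiv_range hmem hpart hmeas μ μ' fun A => decide (A ⊆ U)

end Partition

section Shrinking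

variable {Y : Type*} [PseudoEMetricSpace Y] [MeasurableSpace Y] {μ : Measure Y}
  {ζ : ℕ → Y → Set Y} {U : Set Y}

theorem measure_le_measure_iUnion_setOf_subset (hmem : ∀ n y, y ∈ ζ n y)
    (hshrink : ∀ᵐ y ∂μ, Tendsto (fun n => Metric.ediam (ζ n y)) atTop (𝓝 0)) (hU : IsOpen U) :
    μ U ≤ μ (⋃ n, {y | ζ n y ⊆ U}) := by
  refine measure_mono_ae ?_
  filter_upwards [hshrink] with y hy hyU
  obtain ⟨ε, hε, hball⟩ := EMetric.isOpen_iff.1 hU y hyU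
  obtain ⟨n, hn⟩ := (hy.eventually (eventually_lt_nhds hε)).exists
  exact mem_iUnion.2 ⟨n, fun z hz =>
    hball ((Metric.edist_le_ediam_of_mem hz (hmem n y)).trans_lt hn)⟩

theorem eventually_lt_measure_setOf_subset [IsFiniteMeasure μ] (hmem : ∀ n y, y ∈ ζ n y)
    (hnested : ∀ m n, n ≤ m → ∀ y, ζ m y ⊆ ζ n y)
    (hshrink : ∀ᵐ y ∂μ, Tendsto (fun n => Metric.ediam (ζ n y)) atTop (𝓝 0)) (hU : IsOpen U)
    {r : ℝ} (hr : r < (μ U).toReal) :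
    ∀ᶠ n in atTop, r < (μ {y | ζ n y ⊆ U}).toReal := by
  have hmono : Monotone fun n => {y | ζ n y ⊆ U} := fun m n hmn y hy =>
    (hnested n m hmn y).trans hy
  have hlim := (ENNReal.tendsto_toReal (measure_ne_top μ _)).comp
    (tendsto_measure_iUnion_atTop (μ := μ) hmono)
  refine hlim.eventually (lt_mem_nhds (hr.trans_le ?_))
  exact ENNReal.toReal_mono (measure_ne_top μ _)
    (measure_le_measure_iUnion_setOf_subset hmem hshrink hU)

end Shrinking

/-- Let `μ, μ'` be two Borel probability measures on a metric space `Y`,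
and let `(ζₙ)` be a sequence of countable Borel partitions of `Y` (here `ζ n y` denotes the
element of the `n`-th partition containing `y`) which are nested (`ζ m y ⊆ ζ n y` for
`m ≥ n`) and nicely shrinking with respect to `μ` (for `μ`-a.e. `y`, `diam (ζ n y) → 0`).
If `μ` is not absolutely continuous with respect to `μ'`, then the Kullback–Leibler
divergences `D_{ζₙ}(μ ∥ μ') = ∑_{A ∈ ζₙ} −μ(A) log(μ'(A)/μ(A))` tend to `∞`. -/
theorem stmt_6 {Y : Type*} [MetricSpace Y] [MeasurableSpace Y] [BorelSpace Y]
    (μ μ' : Measure Y) [IsProbabilityMeasure μ] [IsProbabilityMeasure μ']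
    (ζ : ℕ → Y → Set Y)
    (hmem : ∀ n y, y ∈ ζ n y)
    (hpart : ∀ n y y', y' ∈ ζ n y → ζ n y' = ζ n y)
    (hmeas : ∀ n y, MeasurableSet (ζ n y))
    (hcount : ∀ n, (Set.range (ζ n)).Countable)
    (hnested : ∀ m n, n ≤ m → ∀ y, ζ m y ⊆ ζ n y)
    (hshrink : ∀ᵐ y ∂μ, Tendsto (fun n => EMetric.diam (ζ n y)) atTop (nhds 0))
    (hsing : ¬ μ ≪ μ') :
    Tendsto (fun n => klDiv (fun A : Set.range (ζ n) => (μ A.1).toReal)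
        (fun A : Set.range (ζ n) => (μ' A.1).toReal)) atTop (nhds (⊤ : EReal)) := by
  rw [EReal.tendsto_nhds_top_iff_real]
  intro M
  obtain ⟨S, hS', hS⟩ : ∃ S, μ' S = 0 ∧ μ S ≠ 0 := by
    contrapose! hsing
    exact .mk fun s _ => hsing s
  set a := (μ S).toReal
  have ha : 0 < a := ENNReal.toReal_pos hS (measure_ne_top μ S)
  set t := 2 * (|M| + 3) / a
  have ht : a / 2 * t = |M| + 3 := by
    simp only [t]
    field_simp
  obtain ⟨U, hSU, hU, hU'⟩ := S.exists_isOpen_lt_of_lt (μ := μ') (ENNReal.ofReal (Real.exp (-t)))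
    (by simpa [hS'] using Real.exp_pos (-t))
  have haU : a / 2 < (μ U).toReal :=
    (half_lt_self ha).trans_le (ENNReal.toReal_mono (measure_ne_top μ U) (measure_mono hSU))
  filter_upwards [eventually_lt_measure_setOf_subset hmem hnested hshrink hU haU] with n hn
  have : Countable (range (ζ n)) := (hcount n).to_subtype
  calc (M : EReal) < ((a / 2 * t - 2 : ℝ) : EReal) := by
        rw [ht, EReal.coe_lt_coe_iff]
        linarith [le_abs_self M]
    _ ≤ (((μ {y | ζ n y ⊆ U}).toReal * -Real.log (Real.exp (-t)) - 2 : ℝ) : EReal) := by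
        rw [Real.log_exp, neg_neg, EReal.coe_le_coe_iff]
        gcongr
    _ ≤ _ := mul_neg_log_sub_two_le_klDiv_range (hmem n) (hpart n) (hmeas n) μ μ'
        (ENNReal.toReal_lt_of_lt_ofReal hU').le
end

section
/- Let μ be a Borel probability measure on ℝ and let a ∈ (0,1). Then for Lebesgue-almost every r ∈ ℝ, the series ∑_{n=0}^∞ μ([r − aⁿ, r + aⁿ]) converges. -/
/-! Tonelli on `{(x, r) | |x - r| ≤ c}` swaps the roles of `μ` and Lebesgue measure:
`∫⁻ r, μ [r - c, r + c] = ∫⁻ x, volume [x - c, x + c] ∂μ = 2c`.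
Hence `∫⁻ r, ∑ₙ μ [r - aⁿ, r + aⁿ] = ∑ₙ 2aⁿ < ∞`, and a function with finite integral is finite almost everywhere. -/

open MeasureTheory Metric
open scoped ENNReal

section ClosedBall

variable {α : Type*} [PseudoMetricSpace α] [MeasurableSpace α] [OpensMeasurableSpace α]
  [SecondCountableTopology α]

lemma measurableSet_dist_le (c : ℝ) : MeasurableSet {p : α × α | dist p.2 p.1 ≤ c} :=
  measurableSet_le (by fun_prop) measurable_const

lemma measurable_measure_closedBall (μ : Measure α) [SFinite μ] (c : ℝ) :
    Measurable fun x => μ (closedBall x c) :=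
  measurable_measure_prodMk_left (measurableSet_dist_le c)

lemma lintegral_measure_closedBall_comm (μ ν : Measure α) [SFinite μ] [SFinite ν] (c : ℝ) :
    ∫⁻ x, ν (closedBall x c) ∂μ = ∫⁻ y, μ (closedBall y c) ∂ν := by
  have hS := measurableSet_dist_le (α := α) c
  calc ∫⁻ x, ν (closedBall x c) ∂μ = μ.prod ν {p | dist p.2 p.1 ≤ c} :=
        (Measure.prod_apply hS).symm
    _ = ∫⁻ y, μ {x | dist y x ≤ c} ∂ν := Measure.prod_apply_symm hS
    _ = ∫⁻ y, μ (closedBall y c) ∂ν := by simp only [dist_comm _ (_ : α), closedBall]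

end ClosedBall

lemma Real.lintegral_measure_closedBall (μ : Measure ℝ) [SFinite μ] (c : ℝ) :
    ∫⁻ r, μ (closedBall r c) = ENNReal.ofReal (2 * c) * μ Set.univ := by
  simp [lintegral_measure_closedBall_comm volume μ, Real.volume_closedBall]

lemma Real.ae_summable_measure_closedBall (μ : Measure ℝ) [IsFiniteMeasure μ] {c : ℕ → ℝ}
    (hc : Summable c) : ∀ᵐ r, Summable fun n => (μ (closedBall r (c n))).toReal := by
  have hmeas n := measurable_measure_closedBall μ (c n)
  have hfinite : ∫⁻ r, ∑' n, μ (closedBall r (c n)) ≠ ∞ := by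
    simp only [lintegral_tsum fun n => (hmeas n).aemeasurable, lintegral_measure_closedBall,
      ENNReal.tsum_mul_right]
    exact ENNReal.mul_ne_top (hc.mul_left 2).tsum_ofReal_ne_top (measure_ne_top μ _)
  filter_upwards [ae_lt_top (Measurable.tsum hmeas) hfinite] with r hr
  exact ENNReal.summable_toReal hr.ne

/-- Let `μ` be a Borel probability measure on `ℝ` and let `a ∈ (0,1)`.
Then for Lebesgue-almost every `r ∈ ℝ`, the series `∑ₙ μ([r − aⁿ, r + aⁿ])` converges. -/
theorem stmt_7 (μ : Measure ℝ) [IsProbabilityMeasure μ] (a : ℝ) (ha : a ∈ Set.Ioo (0:ℝ) 1) :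
    ∀ᵐ r ∂(volume : Measure ℝ),
      Summable fun n : ℕ => (μ (Set.Icc (r - a ^ n) (r + a ^ n))).toReal := by
  simpa only [Real.closedBall_eq_Icc] using
    Real.ae_summable_measure_closedBall μ (summable_geometric_of_lt_one ha.1.le ha.2)
end

section
/- Let X be a CAT(−1) space, c ∈ GX, and c₁, c₂ ∈ W^uu(c) two geodesics in the same strong unstable set. Then there exists a universal constant C (independent of c, c₁, c₂) such that d_{GX}(c₁, c₂) ≤ C d⁺(c₁, c₂), where d⁺ is the Hamenstädt metric d⁺(c₁,c₂) = exp( lim_{t→∞} ½ d(c₁(t), c₂(t)) − t ). -/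
open MeasureTheory

/-- `γ : ℝ → X` is a geodesic segment from `x` to `y`, parametrized by arclength on
`[0, dist x y]`. -/
def IsGeodesicSegment {X : Type*} [MetricSpace X] (γ : ℝ → X) (x y : X) : Prop :=
  γ 0 = x ∧ γ (dist x y) = y ∧
    ∀ s ∈ Set.Icc (0 : ℝ) (dist x y), ∀ t ∈ Set.Icc (0 : ℝ) (dist x y),
      dist (γ s) (γ t) = |s - t|

/-- A geodesic metric space: any two points are joined by a geodesic segment. -/
def GeodesicSpace (X : Type*) [MetricSpace X] : Prop :=
  ∀ x y : X, ∃ γ : ℝ → X, IsGeodesicSegment γ x y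

/-- Geodesic completeness (for the spaces considered here): any two points lie on a
common geodesic line, i.e. every geodesic segment extends to an isometric embedding of `ℝ`. -/
def GeodesicallyComplete (X : Type*) [MetricSpace X] : Prop :=
  ∀ x y : X, ∃ c : ℝ → X, Isometry c ∧ c 0 = x ∧ c (dist x y) = y

/-- `X` is CAT(−1): geodesic triangles are at least as thin as comparison triangles in the
hyperbolic plane `ℍ` (the upper half-plane with its hyperbolic metric). Given a triangle
`x y z` with sides `γ₁ : x → y`, `γ₂ : x → z`, a comparison triangle `x' y' z'` in `ℍ`
with the same side lengths, and comparison points `p` on `[x', y']` and `q` on `[x', z']`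
at parameters `s`, `t`, we have `dist (γ₁ s) (γ₂ t) ≤ dist p q`. -/
def CATMinusOne (X : Type*) [MetricSpace X] : Prop :=
  ∀ (x y z : X) (γ₁ γ₂ : ℝ → X), IsGeodesicSegment γ₁ x y → IsGeodesicSegment γ₂ x z →
    ∀ x' y' z' : UpperHalfPlane,
      dist x' y' = dist x y → dist x' z' = dist x z → dist y' z' = dist y z →
      ∀ s ∈ Set.Icc (0 : ℝ) (dist x y), ∀ t ∈ Set.Icc (0 : ℝ) (dist x z),
        ∀ p q : UpperHalfPlane,
          dist x' p = s → dist p y' = dist x y - s →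
          dist x' q = t → dist q z' = dist x z - t →
          dist (γ₁ s) (γ₂ t) ≤ dist p q

/-- The distance on the space `GX` of geodesic lines:
`d_{GX}(c, c') = ∫ d(c(s), c'(s)) e^{−2|s|} ds`. -/
noncomputable def dGX {X : Type*} [MetricSpace X] (c c' : ℝ → X) : ℝ :=
  ∫ s : ℝ, dist (c s) (c' s) * Real.exp (-2 * |s|)

/-- The geodesic flow `(g_t c)(s) = c(t + s)`. -/
def geodFlow {X : Type*} (t : ℝ) (c : ℝ → X) : ℝ → X := fun s => c (t + s)

/-- The ergodic integral `Φ(c, t) = ∫₀ᵗ φ(g_s c) ds`. -/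
noncomputable def ergInt {X : Type*} (φ : (ℝ → X) → ℝ) (c : ℝ → X) (t : ℝ) : ℝ :=
  ∫ s in (0 : ℝ)..t, φ (geodFlow s c)

/-- `φ` has the Bowen property on `GX`: there are `ε > 0` and `C` such that any two
geodesic lines staying `ε`-close (in `d_{GX}`) along a time interval `[0, t]` have ergodic
integrals over `[0, t]` differing by at most `C`. -/
def BowenProperty {X : Type*} [MetricSpace X] (φ : (ℝ → X) → ℝ) : Prop :=
  ∃ ε > (0 : ℝ), ∃ C : ℝ, ∀ c c' : ℝ → X, Isometry c → Isometry c' →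
    ∀ t ≥ (0 : ℝ), (∀ s ∈ Set.Icc (0 : ℝ) t, dGX (geodFlow s c) (geodFlow s c') ≤ ε) →
      |ergInt φ c t - ergInt φ c' t| ≤ C

/-- The weight function `φ̄(x, y)`: the supremum of `∫₀^{d(x,y)} φ(g_t c) dt` over all
geodesic lines `c` with `c(0) = x` and `c(d(x,y)) = y` (extensions of the segment `[x,y]`). -/
noncomputable def barPhi {X : Type*} [MetricSpace X] (φ : (ℝ → X) → ℝ) (x y : X) : ℝ :=
  sSup ((fun c : ℝ → X => ergInt φ c (dist x y)) ''
    {c : ℝ → X | Isometry c ∧ c 0 = x ∧ c (dist x y) = y})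

/-! Comparison with `ℍ` in the two thin triangles spanned by `c₁ u`, `c₂ u`, `c₁ T`, `c₂ T`
bounds `d(c₁ t, c₂ t)` by a continuous function of `d(c₁ u, c₂ u)` and `d(c₁ T, c₂ T) / 2 - T`;
letting `u → -∞` and `T → ∞` gives `d(c₁ t, c₂ t) ≤ √8 e^{t + ℓ}`, and integrating against
`e^{-2|t|}` gives `d_{GX}(c₁, c₂) ≤ 2√8 e^ℓ`. -/

open Real Filter Topology

namespace Real

lemma sinh_le_exp_div_two (x : ℝ) : sinh x ≤ exp x / 2 := by
  rw [sinh_eq]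
  linarith [exp_pos (-x)]

lemma exp_div_four_le_sinh {x : ℝ} (hx : 1 ≤ x) : exp x / 4 ≤ sinh x := by
  have hinv : exp (-x) * exp x = 1 := by rw [← exp_add, neg_add_cancel, exp_zero]
  have h2 : 2 ≤ exp x := by linarith [add_one_le_exp x]
  rw [sinh_eq]
  nlinarith [exp_pos (-x)]

lemma sq_le_two_mul_cosh_sub_one (x : ℝ) : x ^ 2 ≤ 2 * (cosh x - 1) := by
  have hhalf : cosh x = 2 * sinh (x / 2) ^ 2 + 1 := by
    rw [show x = 2 * (x / 2) by ring, cosh_two_mul, cosh_sq]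
    ring_nf
  have habs : |x / 2| ≤ |sinh (x / 2)| := by
    rw [abs_sinh]
    exact self_le_sinh_iff.mpr (abs_nonneg _)
  nlinarith [sq_le_sq.mpr habs]

lemma integrable_exp_neg_abs : Integrable fun x : ℝ => exp (-|x|) := by
  rw [← integrableOn_univ, ← Set.Iic_union_Ioi (a := (0 : ℝ))]
  refine IntegrableOn.union ?_ ?_
  · refine (integrableOn_exp_Iic 0).congr_fun (fun x hx => ?_) measurableSet_Iic
    rw [abs_of_nonpos hx, neg_neg]
  · refine (integrableOn_exp_neg_Ioi 0).congr_fun (fun x hx => ?_) measurableSet_Ioi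
    rw [abs_of_pos hx]

lemma integral_exp_neg_abs : ∫ x : ℝ, exp (-|x|) = 2 := by
  rw [integral_comp_abs (f := fun x => exp (-x)), integral_exp_neg_Ioi_zero, mul_one]

end Real

namespace UpperHalfPlane

lemma rotatedRay_denom_pos (φ b : ℝ) : 0 < cos φ ^ 2 + sin φ ^ 2 * exp b ^ 2 := by
  rcases eq_or_ne (sin φ) 0 with h | h
  · have := sin_sq_add_cos_sq φ
    rw [h] at this ⊢
    linarith
  · positivity

/-- The image of `exp b • I` under the rotation `z ↦ (cos φ * z + sin φ) / (-sin φ * z + cos φ)`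
about `I`: the point at distance `b` from `I` on the geodesic ray leaving `I` at angle `2φ` with
the imaginary axis. -/
noncomputable def rotatedRay (φ b : ℝ) : ℍ :=
  mk ⟨cos φ * sin φ * (1 - exp b ^ 2) / (cos φ ^ 2 + sin φ ^ 2 * exp b ^ 2),
    exp b / (cos φ ^ 2 + sin φ ^ 2 * exp b ^ 2)⟩ (div_pos (exp_pos b) (rotatedRay_denom_pos φ b))

lemma rotatedRay_re (φ b : ℝ) : (rotatedRay φ b).re =
    cos φ * sin φ * (1 - exp b ^ 2) / (cos φ ^ 2 + sin φ ^ 2 * exp b ^ 2) := rfl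

lemma rotatedRay_im (φ b : ℝ) : (rotatedRay φ b).im =
    exp b / (cos φ ^ 2 + sin φ ^ 2 * exp b ^ 2) := rfl

lemma rotatedRay_zero_right (φ : ℝ) : rotatedRay φ 0 = rotatedRay 0 0 := by
  apply ext_re_im
  · simp [rotatedRay_re]
  · simp [rotatedRay_im, add_comm]

lemma rotatedRay_im_eq (φ b : ℝ) : (rotatedRay φ b).im =
    exp b * (cos φ ^ 2 + sin φ ^ 2) / (cos φ ^ 2 + sin φ ^ 2 * exp b ^ 2) := by
  rw [rotatedRay_im, cos_sq_add_sin_sq, mul_one]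

lemma cosh_dist_rotatedRay_rotatedRay (φ b b' : ℝ) :
    cosh (dist (rotatedRay φ b) (rotatedRay φ b')) = cosh (b - b') := by
  rw [cosh_dist', rotatedRay_re, rotatedRay_re, rotatedRay_im_eq, rotatedRay_im_eq, cosh_eq,
    exp_neg, exp_sub]
  have hD := rotatedRay_denom_pos φ b
  have hD' := rotatedRay_denom_pos φ b'
  have hu := exp_pos b
  have hu' := exp_pos b'
  generalize cos φ = c, sin φ = s, exp b = u, exp b' = u' at *
  have hN : 0 < c ^ 2 + s ^ 2 := by nlinarith
  field_simp
  ring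

lemma cosh_dist_rotatedRay (φ a b : ℝ) :
    cosh (dist (rotatedRay 0 a) (rotatedRay φ b)) =
      cosh a * cosh b - cos (2 * φ) * (sinh a * sinh b) := by
  have hcos : cos (2 * φ) = (cos φ ^ 2 - sin φ ^ 2) / (cos φ ^ 2 + sin φ ^ 2) := by
    rw [cos_sq_add_sin_sq, div_one, cos_two_mul']
  rw [cosh_dist', rotatedRay_re, rotatedRay_re, rotatedRay_im, rotatedRay_im_eq, hcos, cosh_eq,
    cosh_eq, sinh_eq, sinh_eq, exp_neg, exp_neg]
  simp only [cos_zero, sin_zero]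
  have hD := rotatedRay_denom_pos φ b
  have hu := exp_pos a
  have hv := exp_pos b
  generalize cos φ = c, sin φ = s, exp a = u, exp b = v at *
  have hN : 0 < c ^ 2 + s ^ 2 := by nlinarith
  field_simp
  ring

lemma dist_rotatedRay_rotatedRay (φ b b' : ℝ) :
    dist (rotatedRay φ b) (rotatedRay φ b') = |b - b'| :=
  cosh_injOn (Set.mem_Ici.mpr dist_nonneg) (Set.mem_Ici.mpr (abs_nonneg _)) <| by
    rw [cosh_dist_rotatedRay_rotatedRay, cosh_abs]

lemma exists_comparison_config {A B C s : ℝ} (hA : 0 < A) (hB : 0 < B) (hAB : |A - B| ≤ C)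
    (hC : C ≤ A + B) (hs : 0 ≤ s) (hsA : s ≤ A) (hsB : s ≤ B) :
    ∃ x' y' z' p q : ℍ, dist x' y' = A ∧ dist x' z' = B ∧ dist y' z' = C ∧
      dist x' p = s ∧ dist p y' = A - s ∧ dist x' q = s ∧ dist q z' = B - s ∧
      cosh (dist p q) - 1 = sinh s ^ 2 * (cosh C - cosh (A - B)) / (sinh A * sinh B) := by
  have hSS : 0 < sinh A * sinh B := mul_pos (sinh_pos_iff.mpr hA) (sinh_pos_iff.mpr hB)
  have hC0 : 0 ≤ C := (abs_nonneg _).trans hAB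
  set k := (cosh A * cosh B - cosh C) / (sinh A * sinh B) with hk
  have hk_le : k ≤ 1 := by
    have : cosh (A - B) ≤ cosh C := cosh_le_cosh.mpr (by rwa [abs_of_nonneg hC0])
    rw [hk, div_le_one hSS]
    linarith [cosh_sub A B]
  have hk_ge : -1 ≤ k := by
    have : cosh C ≤ cosh (A + B) :=
      cosh_le_cosh.mpr (by rwa [abs_of_nonneg hC0, abs_of_nonneg (by linarith)])
    rw [hk, le_div_iff₀ hSS]
    linarith [cosh_add A B]
  set φ := arccos k / 2
  have hφ : cos (2 * φ) = k := by
    rw [show 2 * φ = arccos k by ring, cos_arccos hk_ge hk_le]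
  have hsame (ψ a b : ℝ) (hab : a ≤ b) : dist (rotatedRay ψ a) (rotatedRay ψ b) = b - a := by
    rw [dist_rotatedRay_rotatedRay, abs_of_nonpos (by linarith), neg_sub]
  refine ⟨rotatedRay 0 0, rotatedRay 0 A, rotatedRay φ B, rotatedRay 0 s, rotatedRay φ s,
    by simpa using hsame 0 0 A hA.le, ?_, ?_, by simpa using hsame 0 0 s hs,
    hsame 0 s A hsA, ?_, hsame φ s B hsB, ?_⟩
  · simpa [← rotatedRay_zero_right φ] using hsame φ 0 B hB.le
  · refine cosh_injOn (Set.mem_Ici.mpr dist_nonneg) (Set.mem_Ici.mpr hC0) ?_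
    rw [cosh_dist_rotatedRay, hφ, hk, div_mul_cancel₀ _ hSS.ne']
    ring
  · simpa [← rotatedRay_zero_right φ] using hsame φ 0 s hs
  · rw [cosh_dist_rotatedRay, hφ, eq_div_iff hSS.ne', hk, cosh_sub]
    field_simp
    linear_combination (sinh A * sinh B) * cosh_sq s

end UpperHalfPlane

section GeodesicLines

variable {X : Type*} [MetricSpace X] {c₁ c₂ : ℝ → X}

lemma Isometry.isGeodesicSegment {γ : ℝ → X} {x y : X} (hγ : Isometry γ) (h₀ : γ 0 = x)
    (h₁ : γ (dist x y) = y) : IsGeodesicSegment γ x y :=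
  ⟨h₀, h₁, fun s _ t _ => by rw [hγ.dist_eq, Real.dist_eq]⟩

lemma Isometry.geodFlow {c : ℝ → X} (hc : Isometry c) (t : ℝ) : Isometry (geodFlow t c) :=
  hc.comp (IsometryEquiv.addLeft t).isometry

lemma Isometry.dist_apply_apply {c : ℝ → X} (hc : Isometry c) {s t : ℝ} (hst : s ≤ t) :
    dist (c s) (c t) = t - s := by
  rw [hc.dist_eq, Real.dist_eq, abs_of_nonpos (by linarith), neg_sub]

lemma dGX_le_of_dist_le {K : ℝ} (h : ∀ s, dist (c₁ s) (c₂ s) ≤ K * exp s) : dGX c₁ c₂ ≤ 2 * K := by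
  have hK : 0 ≤ K := nonneg_of_mul_nonneg_left (dist_nonneg.trans (h 0)) (exp_pos 0)
  calc dGX c₁ c₂ ≤ ∫ s : ℝ, K * exp (-|s|) := by
        refine integral_mono_of_nonneg (.of_forall fun s => by positivity)
          (integrable_exp_neg_abs.const_mul K) (.of_forall fun s => ?_)
        calc dist (c₁ s) (c₂ s) * exp (-2 * |s|)
            ≤ K * exp s * exp (-2 * |s|) := by gcongr; exact h s
          _ = K * exp (s - 2 * |s|) := by rw [mul_assoc, ← exp_add]; ring_nf
          _ ≤ K * exp (-|s|) := by gcongr; linarith [le_abs_self s]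
    _ = 2 * K := by rw [integral_const_mul, integral_exp_neg_abs, mul_comm]

lemma abs_dist_sub_dist_le (hc₁ : Isometry c₁) (hc₂ : Isometry c₂) (s s' : ℝ) :
    |dist (c₁ s) (c₂ s) - dist (c₁ s') (c₂ s')| ≤ 2 * |s - s'| := by
  have := dist_dist_dist_le (c₁ s) (c₂ s) (c₁ s') (c₂ s')
  rw [hc₁.dist_eq, hc₂.dist_eq, Real.dist_eq, Real.dist_eq] at this
  linarith

lemma integrable_dist_mul_exp (hc₁ : Isometry c₁) (hc₂ : Isometry c₂) :
    Integrable fun s => dist (c₁ s) (c₂ s) * exp (-2 * |s|) := by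
  refine (integrable_exp_neg_abs.const_mul (dist (c₁ 0) (c₂ 0) + 1)).mono'
    ((hc₁.continuous.dist hc₂.continuous).mul (by fun_prop)).aestronglyMeasurable
    (.of_forall fun s => ?_)
  have hs : dist (c₁ s) (c₂ s) ≤ dist (c₁ 0) (c₂ 0) + 2 * |s| := by
    have := abs_dist_sub_dist_le hc₁ hc₂ s 0
    rw [sub_zero] at this
    linarith [abs_le.mp this]
  have hexp : 2 * |s| ≤ exp |s| := by
    nlinarith [quadratic_le_exp_of_nonneg (abs_nonneg s)]
  have hsplit : exp (-2 * |s|) = exp (-|s|) * exp (-|s|) := by rw [← exp_add]; ring_nf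
  have hinv : exp |s| * exp (-|s|) = 1 := by rw [← exp_add, add_neg_cancel, exp_zero]
  have hle : exp (-|s|) ≤ 1 := exp_le_one_iff.mpr (neg_nonpos.mpr (abs_nonneg s))
  rw [Real.norm_eq_abs, abs_of_nonneg (by positivity), hsplit]
  nlinarith [exp_pos (-|s|), mul_nonneg (dist_nonneg (x := c₁ 0) (y := c₂ 0)) (exp_pos (-|s|)).le]

/-- On `[-r, r]` the integrand of `d_{GX}` is at least `(d(c₁ 0, c₂ 0) - 2r) e^{-2r}`. -/
lemma dist_sub_mul_le_dGX (hc₁ : Isometry c₁) (hc₂ : Isometry c₂) {r : ℝ} (hr : 0 ≤ r)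
    (h : 2 * r ≤ dist (c₁ 0) (c₂ 0)) :
    (dist (c₁ 0) (c₂ 0) - 2 * r) * exp (-2 * r) * (2 * r) ≤ dGX c₁ c₂ := by
  have hm : 0 ≤ (dist (c₁ 0) (c₂ 0) - 2 * r) * exp (-2 * r) :=
    mul_nonneg (by linarith) (exp_pos _).le
  have hind : ∫ s : ℝ, (Set.Icc (-r) r).indicator
      (fun _ => (dist (c₁ 0) (c₂ 0) - 2 * r) * exp (-2 * r)) s =
        (dist (c₁ 0) (c₂ 0) - 2 * r) * exp (-2 * r) * (2 * r) := by
    rw [integral_indicator_const _ measurableSet_Icc, Real.volume_real_Icc_of_le (by linarith),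
      smul_eq_mul]
    ring
  rw [← hind]
  refine integral_mono_of_nonneg (.of_forall fun s => Set.indicator_nonneg (fun _ _ => hm) s)
    (integrable_dist_mul_exp hc₁ hc₂) (.of_forall fun s => ?_)
  by_cases hs : s ∈ Set.Icc (-r) r
  · rw [Set.indicator_of_mem hs]
    have hsr : |s| ≤ r := abs_le.mpr hs
    have := abs_dist_sub_dist_le hc₁ hc₂ s 0
    rw [sub_zero] at this
    exact mul_le_mul (by linarith [abs_le.mp this]) (exp_le_exp.mpr (by linarith)) (exp_pos _).le
      dist_nonneg
  · rw [Set.indicator_of_notMem hs]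
    positivity

lemma tendsto_dist_of_tendsto_dGX (hc₁ : Isometry c₁) (hc₂ : Isometry c₂) {l : Filter ℝ}
    (h : Tendsto (fun t => dGX (geodFlow t c₁) (geodFlow t c₂)) l (𝓝 0)) :
    Tendsto (fun t => dist (c₁ t) (c₂ t)) l (𝓝 0) := by
  rw [Metric.tendsto_nhds]
  intro ε hε
  have hη : 0 < ε / 2 * exp (-2 * (ε / 4)) * (2 * (ε / 4)) := by positivity
  filter_upwards [h.eventually (gt_mem_nhds hη)] with t ht
  rw [Real.dist_eq, sub_zero, abs_of_nonneg dist_nonneg]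
  by_contra! hεt
  have hlow := dist_sub_mul_le_dGX (hc₁.geodFlow t) (hc₂.geodFlow t) (r := ε / 4)
    (by positivity) (by simp only [geodFlow, add_zero]; linarith)
  simp only [geodFlow, add_zero] at hlow
  have : ε / 2 * exp (-2 * (ε / 4)) * (2 * (ε / 4)) ≤
      (dist (c₁ t) (c₂ t) - 2 * (ε / 4)) * exp (-2 * (ε / 4)) * (2 * (ε / 4)) := by
    gcongr
    linarith
  linarith

lemma CATMinusOne.dist_sq_le (hcat : CATMinusOne X) {x y z : X} {γ₁ γ₂ : ℝ → X}
    (h₁ : IsGeodesicSegment γ₁ x y) (h₂ : IsGeodesicSegment γ₂ x z) {s : ℝ} (hs : 0 ≤ s)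
    (hsy : s ≤ dist x y) (hsz : s ≤ dist x z) (hy : 1 ≤ dist x y) (hz : 1 ≤ dist x z) :
    dist (γ₁ s) (γ₂ s) ^ 2 ≤ 8 * exp (2 * s - dist x y - dist x z) * (cosh (dist y z) - 1) := by
  have hAB : |dist x y - dist x z| ≤ dist y z := by
    simpa only [dist_comm y x, dist_comm z x] using abs_dist_sub_le y z x
  have hC : dist y z ≤ dist x y + dist x z := by
    simpa only [dist_comm y x] using dist_triangle y x z
  obtain ⟨x', y', z', p, q, hxy, hxz, hyz, hp, hpy, hq, hqz, hpq⟩ :=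
    UpperHalfPlane.exists_comparison_config (by linarith) (by linarith) hAB hC hs hsy hsz
  have hcomp := hcat x y z γ₁ γ₂ h₁ h₂ x' y' z' hxy hxz hyz s ⟨hs, hsy⟩ s ⟨hs, hsz⟩ p q
    hp hpy hq hqz
  have hcosh : cosh (dist x y - dist x z) ≤ cosh (dist y z) :=
    cosh_le_cosh.mpr (hAB.trans_eq (abs_of_nonneg dist_nonneg).symm)
  calc dist (γ₁ s) (γ₂ s) ^ 2
      ≤ dist p q ^ 2 := pow_le_pow_left₀ dist_nonneg hcomp 2
    _ ≤ 2 * (cosh (dist p q) - 1) := sq_le_two_mul_cosh_sub_one _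
    _ = 2 * sinh s ^ 2 * (cosh (dist y z) - cosh (dist x y - dist x z)) /
          (sinh (dist x y) * sinh (dist x z)) := by rw [hpq]; ring
    _ ≤ 2 * (exp s / 2) ^ 2 * (cosh (dist y z) - 1) /
          (exp (dist x y) / 4 * (exp (dist x z) / 4)) := by
        gcongr
        · exact mul_nonneg (by positivity) (sub_nonneg.mpr (one_le_cosh _))
        · exact sinh_le_exp_div_two s
        · exact one_le_cosh _
        · exact exp_div_four_le_sinh hy
        · exact exp_div_four_le_sinh hz
    _ = 8 * exp (2 * s - dist x y - dist x z) * (cosh (dist y z) - 1) := by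
        rw [exp_sub, exp_sub, show 2 * s = s + s by ring, exp_add]
        field_simp
        ring

lemma CATMinusOne.dist_le_sqrt (hcat : CATMinusOne X) {x y z : X} {γ₁ γ₂ : ℝ → X}
    (h₁ : IsGeodesicSegment γ₁ x y) (h₂ : IsGeodesicSegment γ₂ x z) {δ s : ℝ}
    (hyz : |dist x y - dist x z| ≤ δ) (hδ : δ ≤ 1) (hs : 1 ≤ s) (hsy : s + 1 ≤ dist x y) :
    dist (γ₁ s) (γ₂ s) ≤ √(8 * exp (δ + 2 * (s - dist x y)) * (cosh (dist y z) - 1)) := by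
  have hz := abs_le.mp hyz
  rw [Real.le_sqrt dist_nonneg (mul_nonneg (by positivity) (sub_nonneg.mpr (one_le_cosh _)))]
  refine (hcat.dist_sq_le h₁ h₂ (by linarith) (by linarith) (by linarith) (by linarith)
    (by linarith)).trans ?_
  gcongr 8 * exp ?_ * _
  · exact sub_nonneg.mpr (one_le_cosh _)
  · linarith

/-- Join `c₁ u` to `c₂ T` by a geodesic `g`; the comparison in the two triangles with apexes
`c₁ u` and `c₂ T` shows that `c₁ t` and `c₂ t` are both close to points of `g`, and these two
points are at distance `|T - u - d(c₁ u, c₂ T)| ≤ d(c₁ u, c₂ u)` from each other. -/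
lemma CATMinusOne.dist_apply_le (hgc : GeodesicallyComplete X) (hcat : CATMinusOne X)
    (hc₁ : Isometry c₁) (hc₂ : Isometry c₂) {u t T : ℝ} (hut : u + 1 ≤ t) (htT : t + 1 ≤ T)
    (hu : dist (c₁ u) (c₂ u) ≤ 1) :
    dist (c₁ t) (c₂ t) ≤
      √(8 * exp (dist (c₁ u) (c₂ u) + 2 * (t + (dist (c₁ T) (c₂ T) / 2 - T)))) +
        dist (c₁ u) (c₂ u) +
        √(8 * exp (dist (c₁ u) (c₂ u)) * (cosh (dist (c₁ u) (c₂ u)) - 1)) := by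
  set δ := dist (c₁ u) (c₂ u)
  set D := dist (c₁ T) (c₂ T)
  set b := dist (c₁ u) (c₂ T)
  have h₁ : dist (c₁ u) (c₁ T) = T - u := hc₁.dist_apply_apply (by linarith)
  have h₂ : dist (c₂ T) (c₂ u) = T - u := by
    rw [dist_comm]; exact hc₂.dist_apply_apply (by linarith)
  have hb' : dist (c₂ T) (c₁ u) = b := dist_comm _ _
  have hb : |T - u - b| ≤ δ := by
    rw [abs_le]
    constructor
    · linarith [dist_triangle (c₁ u) (c₂ u) (c₂ T), dist_comm (c₂ u) (c₂ T)]
    · linarith [dist_triangle (c₂ T) (c₁ u) (c₂ u)]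
  obtain ⟨g, hg, hg₀, hgb⟩ := hgc (c₁ u) (c₂ T)
  have hnear₁ : dist (c₁ t) (g (t - u)) ≤ √(8 * exp (δ + 2 * (t + (D / 2 - T)))) := by
    have hseg₁ : IsGeodesicSegment (geodFlow u c₁) (c₁ u) (c₁ T) :=
      (hc₁.geodFlow u).isGeodesicSegment (by simp [geodFlow]) (by simp [geodFlow, h₁])
    have hnear := hcat.dist_le_sqrt hseg₁ (hg.isGeodesicSegment hg₀ hgb) (s := t - u)
      (by rwa [h₁]) hu (by linarith) (by rw [h₁]; linarith)
    simp only [geodFlow, add_sub_cancel, h₁] at hnear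
    refine hnear.trans (sqrt_le_sqrt ?_)
    calc 8 * exp (δ + 2 * (t - u - (T - u))) * (cosh D - 1)
        ≤ 8 * exp (δ + 2 * (t - u - (T - u))) * exp D := by
          gcongr
          rw [cosh_eq]
          linarith [exp_le_one_iff.mpr (neg_nonpos.mpr (dist_nonneg : 0 ≤ D)), exp_pos D]
      _ = 8 * exp (δ + 2 * (t + (D / 2 - T))) := by rw [mul_assoc, ← exp_add]; ring_nf
  have hnear₂ : dist (c₂ t) (g (b - (T - t))) ≤ √(8 * exp δ * (cosh δ - 1)) := by
    have hseg₃ : IsGeodesicSegment (fun r => c₂ (T - r)) (c₂ T) (c₂ u) :=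
      (hc₂.comp (IsometryEquiv.subLeft T).isometry).isGeodesicSegment (by simp) (by simp [h₂])
    have hseg₄ : IsGeodesicSegment (fun r => g (b - r)) (c₂ T) (c₁ u) :=
      (hg.comp (IsometryEquiv.subLeft b).isometry).isGeodesicSegment (by simpa using hgb)
        (by simpa [hb'] using hg₀)
    have hnear := hcat.dist_le_sqrt hseg₃ hseg₄ (s := T - t) (by rwa [h₂, hb']) hu
      (by linarith) (by rw [h₂]; linarith)
    simp only [sub_sub_cancel, h₂, dist_comm (c₂ u)] at hnear
    refine hnear.trans (sqrt_le_sqrt ?_)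
    gcongr
    · exact sub_nonneg.mpr (one_le_cosh δ)
    · linarith
  have hmid : dist (g (t - u)) (g (b - (T - t))) ≤ δ := by
    rw [hg.dist_eq, Real.dist_eq]
    convert hb using 2
    ring
  calc dist (c₁ t) (c₂ t)
      ≤ dist (c₁ t) (g (t - u)) + dist (g (t - u)) (g (b - (T - t))) +
          dist (g (b - (T - t))) (c₂ t) := dist_triangle4 _ _ _ _
    _ ≤ _ := by rw [dist_comm _ (c₂ t)]; linarith

/-- The bound of `CATMinusOne.dist_apply_le` is continuous in `d(c₁ u, c₂ u)` and
`d(c₁ T, c₂ T) / 2 - T`, so it passes to the limit `u → -∞`, `T → ∞`. -/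
lemma CATMinusOne.dist_apply_le_sqrt_eight_mul_exp (hgc : GeodesicallyComplete X)
    (hcat : CATMinusOne X) (hc₁ : Isometry c₁) (hc₂ : Isometry c₂)
    (hbot : Tendsto (fun u => dist (c₁ u) (c₂ u)) atBot (𝓝 0)) {ℓ : ℝ}
    (htop : Tendsto (fun t => dist (c₁ t) (c₂ t) / 2 - t) atTop (𝓝 ℓ)) (t : ℝ) :
    dist (c₁ t) (c₂ t) ≤ √8 * exp (t + ℓ) := by
  set F : ℝ × ℝ → ℝ := fun q =>
    √(8 * exp (q.1 + 2 * q.2)) + q.1 + √(8 * exp q.1 * (cosh q.1 - 1))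
  have hF : Continuous F := by fun_prop
  have hlim : Tendsto (fun p : ℝ × ℝ =>
      F (dist (c₁ p.1) (c₂ p.1), t + (dist (c₁ p.2) (c₂ p.2) / 2 - p.2)))
      (atBot ×ˢ atTop) (𝓝 (F (0, t + ℓ))) :=
    (hF.tendsto _).comp ((hbot.comp tendsto_fst).prodMk_nhds ((htop.comp tendsto_snd).const_add t))
  have hev : ∀ᶠ p : ℝ × ℝ in atBot ×ˢ atTop, dist (c₁ t) (c₂ t) ≤
      F (dist (c₁ p.1) (c₂ p.1), t + (dist (c₁ p.2) (c₂ p.2) / 2 - p.2)) := by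
    filter_upwards [((eventually_le_atBot (t - 1)).and
      (hbot.eventually (ge_mem_nhds one_pos))).prod_mk (eventually_ge_atTop (t + 1))]
      with p ⟨⟨hu, hδ⟩, hT⟩
    exact hcat.dist_apply_le hgc hc₁ hc₂ (by linarith) hT hδ
  have hF₀ : F (0, t + ℓ) = √8 * exp (t + ℓ) := by
    have hsq : exp (2 * (t + ℓ)) = exp (t + ℓ) * exp (t + ℓ) := by rw [← exp_add, two_mul]
    simp only [F, zero_add, cosh_zero, sub_self, mul_zero, sqrt_zero, add_zero, hsq]
    rw [sqrt_mul (by norm_num), sqrt_mul_self (exp_pos _).le]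
  exact hF₀ ▸ ge_of_tendsto hlim hev

end GeodesicLines

open Filter in
theorem stmt_14_general {X : Type*} [MetricSpace X]
    (hgc : GeodesicallyComplete X) (hcat : CATMinusOne X) :
    ∃ C : ℝ, ∀ c₁ c₂ : ℝ → X, Isometry c₁ → Isometry c₂ →
      Tendsto (fun t : ℝ => dGX (geodFlow t c₁) (geodFlow t c₂)) atBot (nhds 0) →
      ∀ ℓ : ℝ, Tendsto (fun t : ℝ => dist (c₁ t) (c₂ t) / 2 - t) atTop (nhds ℓ) →
        dGX c₁ c₂ ≤ C * Real.exp ℓ := by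
  refine ⟨2 * √8, fun c₁ c₂ hc₁ hc₂ hunst ℓ htop => ?_⟩
  have hbot := tendsto_dist_of_tendsto_dGX hc₁ hc₂ hunst
  refine (dGX_le_of_dist_le (K := √8 * exp ℓ) fun s => ?_).trans_eq (by ring)
  rw [mul_assoc, ← exp_add, add_comm ℓ]
  exact hcat.dist_apply_le_sqrt_eight_mul_exp hgc hc₁ hc₂ hbot htop s

open Filter in
/-- Let `X` be a proper geodesically complete CAT(−1) space and let
`c₁, c₂` be geodesic lines in the same strong unstable set (i.e. `d_{GX}(g_t c₁, g_t c₂) → 0`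
as `t → −∞`). Then there is a universal constant `C` (independent of `c₁, c₂`) with
`d_{GX}(c₁, c₂) ≤ C d⁺(c₁, c₂)`, where the Hamenstädt distance is
`d⁺(c₁, c₂) = exp(lim_{t→∞} (½ d(c₁(t), c₂(t)) − t))` (here `ℓ` denotes that limit). -/
theorem stmt_14 {X : Type*} [MetricSpace X] [ProperSpace X]
    (hgc : GeodesicallyComplete X) (hcat : CATMinusOne X) :
    ∃ C : ℝ, ∀ c₁ c₂ : ℝ → X, Isometry c₁ → Isometry c₂ →
      Tendsto (fun t : ℝ => dGX (geodFlow t c₁) (geodFlow t c₂)) atBot (nhds 0) →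
      ∀ ℓ : ℝ, Tendsto (fun t : ℝ => dist (c₁ t) (c₂ t) / 2 - t) atTop (nhds ℓ) →
        dGX c₁ c₂ ≤ C * Real.exp ℓ :=
  stmt_14_general hgc hcat
end
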